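/- arXiv:1603.08206 — 2 statements merged into one kernel-verified Lean document; each statement's English description precedes it below -/
import Mathlib

section
/- Let B be a Boolean algebra, N a set, and let the agenda X be the entire free Boolean algebra Fm over a set of at least two variables (so X is closed under all connectives). Suppose F is an aggregator defined on all rational profiles, whose outputs are rational, and which is systematic with decision criterion f : B^N → B, i.e., F(A⃗)(φ) = f((A_i(φ))_{i∈N}) for all rational A⃗ and all φ. Then f is a Boolean algebra homomorphism from the product algebra B^N to B: f preserves ⊤, ⊥, complement, meet, and join. -/
/-- An attitude function on the whole algebra `Fm` is rational if it coincides with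
a Boolean algebra homomorphism `Fm → B`. -/
def IsRational {Fm B : Type*} [BooleanAlgebra Fm] [BooleanAlgebra B]
    (A : Fm → B) : Prop :=
  ∃ v : BoundedLatticeHom Fm B, ∀ φ : Fm, A φ = v φ

/-- Let the agenda be the whole free Boolean algebra `Fm` over a set
`V` of variables with at least two distinct variables (freeness expressed by the
universal property `hfree`). If `F` is an aggregator defined on all rational
profiles whose outputs are rational, and which is systematic with decision
criterion `f : B^N → B`, then `f` is a Boolean algebra homomorphism: it preserves
`⊤`, `⊥`, complement, meet and join. -/
theorem stmt16 {V Fm B : Type*} [BooleanAlgebra Fm] [BooleanAlgebra B] (N : Type*)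
    (gen : V → Fm)
    (hfree : ∀ w : V → B, ∃ v : BoundedLatticeHom Fm B, ∀ x : V, v (gen x) = w x)
    (x₁ x₂ : V) (hx : x₁ ≠ x₂)
    (F : (N → Fm → B) → Fm → B)
    (f : (N → B) → B)
    (hrat : ∀ A : N → Fm → B, (∀ i, IsRational (A i)) → IsRational (F A))
    (hsys : ∀ A : N → Fm → B, (∀ i, IsRational (A i)) →
      ∀ φ : Fm, F A φ = f (fun i => A i φ)) :
    f ⊤ = ⊤ ∧ f ⊥ = ⊥ ∧
    (∀ a : N → B, f aᶜ = (f a)ᶜ) ∧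
    (∀ a b : N → B, f (a ⊓ b) = f a ⊓ f b) ∧
    (∀ a b : N → B, f (a ⊔ b) = f a ⊔ f b) := by
  classical
  -- Setup: for any `a b`, build a rational profile hitting `a` at `gen x₁` and `b` at `gen x₂`.
  have setup : ∀ a b : N → B, ∃ (A : N → Fm → B) (vi : N → BoundedLatticeHom Fm B)
      (u : BoundedLatticeHom Fm B),
      (∀ i φ, A i φ = vi i φ) ∧ (∀ i, vi i (gen x₁) = a i) ∧ (∀ i, vi i (gen x₂) = b i) ∧
      (∀ φ, F A φ = u φ) ∧ (∀ φ, F A φ = f (fun i => A i φ)) := by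
    intro a b
    choose vi hvi using fun i => hfree (fun x => if x = x₁ then a i else b i)
    set A : N → Fm → B := fun i φ => vi i φ with hA
    have hArat : ∀ i, IsRational (A i) := fun i => ⟨vi i, fun _ => rfl⟩
    obtain ⟨u, hu⟩ := hrat A hArat
    refine ⟨A, vi, u, fun i φ => rfl, ?_, ?_, hu, hsys A hArat⟩
    · intro i; simpa using hvi i x₁
    · intro i; have := hvi i x₂; simpa [hx.symm] using this
  refine ⟨?_, ?_, ?_, ?_, ?_⟩
  · -- top
    obtain ⟨A, vi, u, hAvi, h1, h2, hFu, hFf⟩ := setup (fun _ => (⊤ : B)) (fun _ => ⊤)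
    have : f (fun i => A i ⊤) = u ⊤ := by rw [← hFf, hFu]
    exact (by simpa [hAvi] using this : f (fun _ => (⊤ : B)) = ⊤)
  · -- bot
    obtain ⟨A, vi, u, hAvi, h1, h2, hFu, hFf⟩ := setup (fun _ => (⊤ : B)) (fun _ => ⊤)
    have : f (fun i => A i ⊥) = u ⊥ := by rw [← hFf, hFu]
    exact (by simpa [hAvi] using this : f (fun _ => (⊥ : B)) = ⊥)
  · -- compl
    intro a
    obtain ⟨A, vi, u, hAvi, h1, h2, hFu, hFf⟩ := setup a a
    have hfa : f a = u (gen x₁) := by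
      have : f (fun i => A i (gen x₁)) = u (gen x₁) := by rw [← hFf, hFu]
      simpa [hAvi, h1] using this
    have : f (fun i => A i (gen x₁)ᶜ) = u (gen x₁)ᶜ := by rw [← hFf, hFu]
    have h2' : (fun i => A i (gen x₁)ᶜ) = aᶜ := by
      funext i; simp [hAvi, map_compl', h1 i]
    rw [h2', map_compl'] at this
    rw [this, hfa]
  · -- inf
    intro a b
    obtain ⟨A, vi, u, hAvi, h1, h2, hFu, hFf⟩ := setup a b
    have hfa : f a = u (gen x₁) := by
      have : f (fun i => A i (gen x₁)) = u (gen x₁) := by rw [← hFf, hFu]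
      simpa [hAvi, h1] using this
    have hfb : f b = u (gen x₂) := by
      have : f (fun i => A i (gen x₂)) = u (gen x₂) := by rw [← hFf, hFu]
      simpa [hAvi, h2] using this
    have : f (fun i => A i (gen x₁ ⊓ gen x₂)) = u (gen x₁ ⊓ gen x₂) := by rw [← hFf, hFu]
    have h3 : (fun i => A i (gen x₁ ⊓ gen x₂)) = a ⊓ b := by
      funext i; simp [hAvi, map_inf, h1 i, h2 i]
    rw [h3, map_inf] at this
    rw [this, hfa, hfb]
  · -- sup
    intro a b
    obtain ⟨A, vi, u, hAvi, h1, h2, hFu, hFf⟩ := setup a b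
    have hfa : f a = u (gen x₁) := by
      have : f (fun i => A i (gen x₁)) = u (gen x₁) := by rw [← hFf, hFu]
      simpa [hAvi, h1] using this
    have hfb : f b = u (gen x₂) := by
      have : f (fun i => A i (gen x₂)) = u (gen x₂) := by rw [← hFf, hFu]
      simpa [hAvi, h2] using this
    have : f (fun i => A i (gen x₁ ⊔ gen x₂)) = u (gen x₁ ⊔ gen x₂) := by rw [← hFf, hFu]
    have h3 : (fun i => A i (gen x₁ ⊔ gen x₂)) = a ⊔ b := by
      funext i; simp [hAvi, map_sup, h1 i, h2 i]
    rw [h3, map_sup] at this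
    rw [this, hfa, hfb]
end

section
/- (Arrow-type impossibility for binary judgment aggregation) Let N be a finite nonempty electorate, and let the agenda X be the free Boolean algebra over at least two variables. If F is a universal, rational, strongly systematic aggregator with values in the two-element Boolean algebra 2 (i.e., F(A⃗)(φ) = f((A_i(φ))_i) for some f : 2^N → 2 and F preserves rationality), then F is dictatorial: there exists i ∈ N such that F(A⃗)(φ) = A_i(φ) for all rational profiles A⃗ and all φ ∈ X. -/
lemma aux_map_compl {Fm B : Type*} [BooleanAlgebra Fm] [BooleanAlgebra B]
    (u : BoundedLatticeHom Fm B) (φ : Fm) : u φᶜ = (u φ)ᶜ := by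
  have h1 : u φ ⊓ u φᶜ = ⊥ := by rw [← map_inf, inf_compl_eq_bot, map_bot]
  have h2 : u φ ⊔ u φᶜ = ⊤ := by rw [← map_sup, sup_compl_eq_top, map_top]
  exact (compl_unique h1 h2).symm

/-- Arrow-type impossibility for binary judgment aggregation:
Let `N` be a finite nonempty electorate and the agenda the whole free Boolean
algebra `Fm` over at least two distinct variables (freeness given by the universal
property `hfree` with respect to the two-element Boolean algebra `Bool`). If `F` is
a universal, rational, strongly systematic aggregator with decision criterion
`f : 2^N → 2`, then `F` is dictatorial: some individual `i` satisfies
`F(A⃗)(φ) = A_i(φ)` for all rational profiles `A⃗` and all `φ`. -/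
theorem stmt17 {V Fm : Type*} [BooleanAlgebra Fm] (N : Type*) [Fintype N] [Nonempty N]
    (gen : V → Fm)
    (hfree : ∀ w : V → Bool, ∃ v : BoundedLatticeHom Fm Bool, ∀ x : V, v (gen x) = w x)
    (x₁ x₂ : V) (hx : x₁ ≠ x₂)
    (F : (N → Fm → Bool) → Fm → Bool)
    (f : (N → Bool) → Bool)
    (hrat : ∀ A : N → Fm → Bool, (∀ i, IsRational (A i)) → IsRational (F A))
    (hsys : ∀ A : N → Fm → Bool, (∀ i, IsRational (A i)) →
      ∀ φ : Fm, F A φ = f (fun i => A i φ)) :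
    ∃ i : N, ∀ A : N → Fm → Bool, (∀ i', IsRational (A i')) →
      ∀ φ : Fm, F A φ = A i φ := by
  classical
  -- Construct rational profiles with prescribed values at `gen x₁`, `gen x₂`.
  have construct : ∀ a b : N → Bool,
      ∃ (v : N → BoundedLatticeHom Fm Bool) (u : BoundedLatticeHom Fm Bool),
        (∀ i, v i (gen x₁) = a i) ∧ (∀ i, v i (gen x₂) = b i) ∧
        (∀ i, IsRational (fun φ => (v i φ : Bool))) ∧
        (∀ φ, F (fun i φ => v i φ) φ = u φ) := by
    intro a b
    choose v hv using fun i =>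
      hfree (fun x => if x = x₁ then a i else if x = x₂ then b i else ⊥)
    have hA : ∀ i, IsRational (fun φ => (v i φ : Bool)) := fun i => ⟨v i, fun _ => rfl⟩
    obtain ⟨u, hu⟩ := hrat (fun i φ => v i φ) hA
    refine ⟨v, u, fun i => ?_, fun i => ?_, hA, hu⟩
    · simpa using hv i x₁
    · have := hv i x₂
      simpa [hx.symm] using this
  -- derive algebraic properties of f
  have hval : ∀ (a b : N → Bool) (φ : Fm),
      (∃ (v : N → BoundedLatticeHom Fm Bool) (u : BoundedLatticeHom Fm Bool),
        (∀ i, v i (gen x₁) = a i) ∧ (∀ i, v i (gen x₂) = b i) ∧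
        (∀ i, IsRational (fun φ => (v i φ : Bool))) ∧
        (∀ φ, F (fun i φ => v i φ) φ = u φ)) → True := fun _ _ _ _ => trivial
  clear hval
  have key : ∀ (a b : N → Bool),
      f (fun i => a i ⊓ b i) = f a ⊓ f b ∧
      f (fun i => a i ⊔ b i) = f a ⊔ f b ∧
      f (fun i => (a i)ᶜ) = (f a)ᶜ ∧
      f (fun _ => (⊤ : Bool)) = ⊤ := by
    intro a b
    obtain ⟨v, u, hv1, hv2, hA, hu⟩ := construct a b
    have hFA : ∀ φ : Fm, u φ = f (fun i => v i φ) := by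
      intro φ
      rw [← hu φ, hsys _ hA φ]
    have ha : f a = u (gen x₁) := by
      rw [hFA]; congr 1; funext i; rw [hv1]
    have hb : f b = u (gen x₂) := by
      rw [hFA]; congr 1; funext i; rw [hv2]
    refine ⟨?_, ?_, ?_, ?_⟩
    · have : f (fun i => a i ⊓ b i) = u (gen x₁ ⊓ gen x₂) := by
        rw [hFA]; congr 1; funext i; rw [map_inf, hv1, hv2]
      rw [this, map_inf, ha, hb]
    · have : f (fun i => a i ⊔ b i) = u (gen x₁ ⊔ gen x₂) := by
        rw [hFA]; congr 1; funext i; rw [map_sup, hv1, hv2]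
      rw [this, map_sup, ha, hb]
    · have : f (fun i => (a i)ᶜ) = u (gen x₁)ᶜ := by
        rw [hFA]; congr 1; funext i; rw [aux_map_compl, hv1]
      rw [this, aux_map_compl, ha]
    · have : f (fun _ => (⊤ : Bool)) = u ⊤ := by
        rw [hFA]; congr 1; funext i; rw [map_top]
      rw [this, map_top]
  have hf_inf : ∀ a b : N → Bool, f (fun i => a i ⊓ b i) = f a ⊓ f b :=
    fun a b => (key a b).1
  have hf_sup : ∀ a b : N → Bool, f (fun i => a i ⊔ b i) = f a ⊔ f b :=
    fun a b => (key a b).2.1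
  have hf_compl : ∀ a : N → Bool, f (fun i => (a i)ᶜ) = (f a)ᶜ :=
    fun a => (key a a).2.2.1
  have hf_top : f (fun _ => (⊤ : Bool)) = ⊤ := (key (fun _ => ⊤) (fun _ => ⊤)).2.2.2
  have hf_bot : f (fun _ => (⊥ : Bool)) = ⊥ := by
    have h := hf_compl (fun _ => (⊤ : Bool))
    rw [hf_top] at h
    simpa using h
  -- the unit vector functions
  set e : N → N → Bool := fun i j => if j = i then ⊤ else ⊥ with he
  -- indicator of a finset
  have hind : ∀ s : Finset N, f (fun j => if j ∈ s then ⊤ else ⊥) =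
      s.sup (fun i => f (e i)) := by
    intro s
    induction s using Finset.induction_on with
    | empty => simpa using hf_bot
    | @insert a s ha ih =>
      have heq : (fun j => if j ∈ insert a s then (⊤ : Bool) else ⊥) =
          (fun j => e a j ⊔ (if j ∈ s then ⊤ else ⊥)) := by
        funext j
        by_cases hja : j = a <;> by_cases hjs : j ∈ s <;>
          simp [he, hja, hjs, Finset.mem_insert]
      rw [heq, hf_sup, ih, Finset.sup_insert]
  -- existence of a dictator coordinate
  have hex : ∃ i : N, f (e i) = ⊤ := by
    by_contra hcon
    push_neg at hcon
    have hall : ∀ i : N, f (e i) = ⊥ := by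
      intro i
      have := hcon i
      revert this
      cases f (e i) <;> simp
    have h1 : f (fun j => if j ∈ (Finset.univ : Finset N) then (⊤:Bool) else ⊥) = ⊥ := by
      rw [hind]
      exact (Finset.sup_eq_bot_iff _ _).mpr (fun i _ => hall i)
    have h2 : (fun j => if j ∈ (Finset.univ : Finset N) then (⊤:Bool) else ⊥) =
        (fun _ => (⊤ : Bool)) := by funext j; simp
    rw [h2, hf_top] at h1
    exact absurd h1 (by simp)
  obtain ⟨i, hi⟩ := hex
  -- f is projection onto coordinate i
  have hproj : ∀ a : N → Bool, f a = a i := by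
    intro a
    cases h : a i with
    | false =>
      have heq : (fun j => e i j ⊓ a j) = (fun _ => (⊥ : Bool)) := by
        funext j
        by_cases hji : j = i
        · subst hji; simp [he, h]
        · simp [he, hji]
      have := hf_inf (e i) a
      rw [heq, hf_bot, hi] at this
      simpa using this.symm
    | true =>
      have heq : (fun j => e i j ⊓ a j) = e i := by
        funext j
        by_cases hji : j = i
        · subst hji; simp [he, h]
        · simp [he, hji]
      have := hf_inf (e i) a
      rw [heq, hi] at this
      simpa using this
  refine ⟨i, fun A hA φ => ?_⟩
  rw [hsys A hA φ, hproj]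
end
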